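/- In the coupling setting, let α, α' : ℝ → [0,1] be measurable, let δ ∈ [0,1] satisfy |α(t) − α'(t)| ≤ δ for all t ∈ ℝ, and let X, X' : Ω → ℝ be measurable random variables with X(ω) = X'(ω) for every ω in the agreement event B(α,α'). Then sup_{x ∈ ℝ} |P(X ≤ x) − P(X' ≤ x)| ≤ 1 − E[(1−δ)^N]. (This is the quantitative form of the uniform continuity of distribution functions, Theorem 3(b) of the paper; note the bound is independent of X, X' and x.) -/

import Mathlib

/-!
On the agreement event `X = X'`, so the two distribution functions differ by at most
`P(Bᶜ) = 1 - P(B)`. Since the marks `Uᵢ` are independent of `(N, b)`, `P(B)` is the average,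
over the law of `(N, b)`, of the probability that independent uniform variables `U₀, …, Uₙ₋₁`
avoid fixed intervals of lengths `|α(bᵢ) - α'(bᵢ)| ≤ δ`; that probability is at least
`(1 - δ)ⁿ`, so `P(B) ≥ E[(1 - δ)^N]`.
-/

open MeasureTheory ProbabilityTheory
open scoped ENNReal

/-- The agreement event `B(α,α')` of the coupling construction: no mark `Uᵢ`, `i < N`, falls
in the interval `(min(α(bᵢ), α'(bᵢ)), max(α(bᵢ), α'(bᵢ))]`. -/
def agreeEvent {Ω : Type*} (N : Ω → ℕ) (b U : ℕ → Ω → ℝ) (α α' : ℝ → ℝ) : Set Ω :=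
  {ω | ∀ i < N ω,
    U i ω ∉ Set.Ioc (min (α (b i ω)) (α' (b i ω))) (max (α (b i ω)) (α' (b i ω)))}

open Set
open scoped symmDiff

theorem abs_measureReal_sub_le_of_symmDiff_subset {Ω : Type*} [MeasurableSpace Ω]
    {μ : Measure Ω} [IsFiniteMeasure μ] {s t u : Set Ω} (hst : s ∆ t ⊆ u) :
    |μ.real s - μ.real t| ≤ μ.real u := by
  have key : ∀ s t : Set Ω, s ∆ t ⊆ u → μ.real s - μ.real t ≤ μ.real u := fun s t h =>
    calc μ.real s - μ.real t ≤ (μ s - μ t).toReal := ENNReal.le_toReal_sub (measure_ne_top μ t)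
      _ ≤ μ.real u :=
        ENNReal.toReal_mono (measure_ne_top μ u) (le_measure_symmDiff.trans (measure_mono h))
  exact abs_sub_le_iff.2 ⟨key s t hst, key t s (symmDiff_comm s t ▸ hst)⟩

theorem ProbabilityTheory.IndepFun.measure_preimage_eq_lintegral {Ω β γ : Type*}
    [MeasurableSpace Ω] [MeasurableSpace β] [MeasurableSpace γ] {μ : Measure Ω}
    [IsFiniteMeasure μ] {T : Ω → β} {V : Ω → γ} (hTV : IndepFun T V μ) (hT : Measurable T)
    (hV : Measurable V) {S : Set (β × γ)} (hS : MeasurableSet S) :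
    μ ((fun ω => (T ω, V ω)) ⁻¹' S) = ∫⁻ y, μ (V ⁻¹' (Prod.mk y ⁻¹' S)) ∂μ.map T := by
  rw [← Measure.map_apply (hT.prodMk hV) hS,
    (indepFun_iff_map_prod_eq_prod_map_map hT.aemeasurable hV.aemeasurable).1 hTV,
    Measure.prod_apply hS]
  exact lintegral_congr fun y => Measure.map_apply hV (measurable_prodMk_left hS)

theorem measure_preimage_Ioc_le_of_map_eq_uniform {Ω : Type*} [MeasurableSpace Ω]
    {μ : Measure Ω} {U : Ω → ℝ} (hU : Measurable U)
    (hUunif : μ.map U = (volume : Measure ℝ).restrict (Icc 0 1)) (a b : ℝ) :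
    μ (U ⁻¹' Ioc a b) ≤ ENNReal.ofReal (b - a) := by
  rw [← Measure.map_apply hU measurableSet_Ioc, hUunif, ← Real.volume_Ioc]
  exact Measure.restrict_apply_le _ _

theorem ProbabilityTheory.iIndepFun.ofReal_pow_le_measure_forall_notMem {Ω β : Type*}
    [MeasurableSpace Ω] [MeasurableSpace β] {μ : Measure Ω} [IsProbabilityMeasure μ]
    {U : ℕ → Ω → β} (hU : iIndepFun U μ) (hUmeas : ∀ i, Measurable (U i)) {s : ℕ → Set β}
    (hs : ∀ i, MeasurableSet (s i)) {δ : ℝ} (hδ₀ : 0 ≤ δ) (hδ₁ : δ ≤ 1)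
    (hUs : ∀ i, μ (U i ⁻¹' s i) ≤ ENNReal.ofReal δ) (n : ℕ) :
    ENNReal.ofReal ((1 - δ) ^ n) ≤ μ {ω | ∀ i < n, U i ω ∉ s i} := by
  have hfactor : ∀ i, ENNReal.ofReal (1 - δ) ≤ μ (U i ⁻¹' (s i)ᶜ) := fun i => by
    rw [preimage_compl, prob_compl_eq_one_sub (hUmeas i (hs i)), ENNReal.ofReal_sub _ hδ₀,
      ENNReal.ofReal_one]
    exact tsub_le_tsub_left (hUs i) 1
  have hinter : {ω | ∀ i < n, U i ω ∉ s i} = ⋂ i ∈ Finset.range n, U i ⁻¹' (s i)ᶜ := by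
    ext ω; simp
  rw [hinter, hU.meas_biInter fun i _ => ⟨(s i)ᶜ, (hs i).compl, rfl⟩,
    ENNReal.ofReal_pow (by linarith)]
  simpa using Finset.prod_le_prod' (s := Finset.range n) fun i _ => hfactor i

def agreeSet (α α' : ℝ → ℝ) : Set ((ℕ × (ℕ → ℝ)) × (ℕ → ℝ)) :=
  {p | ∀ i < p.1.1,
    p.2 i ∉ Ioc (min (α (p.1.2 i)) (α' (p.1.2 i))) (max (α (p.1.2 i)) (α' (p.1.2 i)))}

theorem agreeEvent_eq_preimage_agreeSet {Ω : Type*} (N : Ω → ℕ) (b U : ℕ → Ω → ℝ)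
    (α α' : ℝ → ℝ) :
    agreeEvent N b U α α' = (fun ω => ((N ω, fun i => b i ω), fun i => U i ω)) ⁻¹' agreeSet α α' :=
  rfl

theorem measurableSet_agreeSet {α α' : ℝ → ℝ} (hα : Measurable α) (hα' : Measurable α') :
    MeasurableSet (agreeSet α α') := by
  unfold agreeSet
  measurability

theorem measurableSet_agreeEvent {Ω : Type*} [MeasurableSpace Ω] {N : Ω → ℕ} (hN : Measurable N)
    {b U : ℕ → Ω → ℝ} (hb : ∀ i, Measurable (b i)) (hU : ∀ i, Measurable (U i))
    {α α' : ℝ → ℝ} (hα : Measurable α) (hα' : Measurable α') :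
    MeasurableSet (agreeEvent N b U α α') := by
  rw [agreeEvent_eq_preimage_agreeSet]
  exact (measurableSet_agreeSet hα hα').preimage (by fun_prop)

theorem integral_pow_le_measureReal_agreeEvent {Ω : Type*} [MeasurableSpace Ω]
    {P : Measure Ω} [IsProbabilityMeasure P] {N : Ω → ℕ} (hN : Measurable N)
    {b : ℕ → Ω → ℝ} (hb : ∀ i, Measurable (b i)) {U : ℕ → Ω → ℝ}
    (hUmeas : ∀ i, Measurable (U i)) (hUindep : iIndepFun U P)
    (hUunif : ∀ i, P.map (U i) = (volume : Measure ℝ).restrict (Icc 0 1))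
    (hUindepNb : Indep (⨆ i, MeasurableSpace.comap (U i) inferInstance)
      (MeasurableSpace.comap N inferInstance ⊔ ⨆ i, MeasurableSpace.comap (b i) inferInstance)
      P)
    {α α' : ℝ → ℝ} (hα : Measurable α) (hα' : Measurable α') {δ : ℝ} (hδ : δ ≤ 1)
    (hdiff : ∀ t, |α t - α' t| ≤ δ) :
    ∫ ω, (1 - δ) ^ N ω ∂P ≤ P.real (agreeEvent N b U α α') := by
  set T : Ω → ℕ × (ℕ → ℝ) := fun ω => (N ω, fun i => b i ω)
  set V : Ω → ℕ → ℝ := fun ω i => U i ω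
  have hT : Measurable T := hN.prodMk (measurable_pi_lambda _ hb)
  have hV : Measurable V := measurable_pi_lambda _ hUmeas
  have hTV : IndepFun T V P := by
    rw [IndepFun_iff_Indep]
    convert hUindepNb.symm using 1
    · exact (MeasurableSpace.comap_prodMk N _).trans
        (congrArg _ (MeasurableSpace.comap_process_pi b))
    · exact MeasurableSpace.comap_process_pi U
  have hδ₀ : 0 ≤ δ := (abs_nonneg _).trans (hdiff 0)
  have hsection : ∀ y : ℕ × (ℕ → ℝ),
      ENNReal.ofReal ((1 - δ) ^ y.1) ≤ P (V ⁻¹' (Prod.mk y ⁻¹' agreeSet α α')) := by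
    rintro ⟨n, β⟩
    refine hUindep.ofReal_pow_le_measure_forall_notMem hUmeas
      (s := fun i => Ioc (min (α (β i)) (α' (β i))) (max (α (β i)) (α' (β i))))
      (fun _ => measurableSet_Ioc) hδ₀ hδ (fun i => ?_) n
    refine (measure_preimage_Ioc_le_of_map_eq_uniform (hUmeas i) (hUunif i) _ _).trans ?_
    exact ENNReal.ofReal_le_ofReal (by rw [max_sub_min_eq_abs']; exact hdiff _)
  have hlower : ∫⁻ ω, ENNReal.ofReal ((1 - δ) ^ N ω) ∂P ≤ P (agreeEvent N b U α α') := by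
    rw [agreeEvent_eq_preimage_agreeSet,
      hTV.measure_preimage_eq_lintegral hT hV (measurableSet_agreeSet hα hα'),
      ← lintegral_map (f := fun y => ENNReal.ofReal ((1 - δ) ^ y.1)) (by fun_prop) hT]
    exact lintegral_mono hsection
  rw [integral_eq_lintegral_of_nonneg_ae (ae_of_all _ fun ω => pow_nonneg (by linarith) _)
    (by fun_prop)]
  exact ENNReal.toReal_mono (measure_ne_top _ _) hlower

theorem dist_cdf_le_of_agree_general {Ω : Type*} [MeasurableSpace Ω]
    (P : Measure Ω) [IsProbabilityMeasure P]
    (N : Ω → ℕ) (hN : Measurable N)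
    (b : ℕ → Ω → ℝ) (hb : ∀ i, Measurable (b i))
    (U : ℕ → Ω → ℝ) (hUmeas : ∀ i, Measurable (U i))
    (hUindep : iIndepFun U P)
    (hUunif : ∀ i, P.map (U i) = (volume : Measure ℝ).restrict (Set.Icc 0 1))
    (hUindepNb : Indep (⨆ i, MeasurableSpace.comap (U i) inferInstance)
      (MeasurableSpace.comap N inferInstance ⊔ ⨆ i, MeasurableSpace.comap (b i) inferInstance)
      P)
    (α α' : ℝ → ℝ) (hαm : Measurable α) (hα'm : Measurable α')
    (δ : ℝ) (hδ : δ ∈ Set.Icc (0 : ℝ) 1) (hdiff : ∀ t, |α t - α' t| ≤ δ)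
    (X X' : Ω → ℝ)
    (hagree : ∀ ω ∈ agreeEvent N b U α α', X ω = X' ω) :
    ∀ x : ℝ, |(P {ω | X ω ≤ x}).toReal - (P {ω | X' ω ≤ x}).toReal| ≤
      1 - ∫ ω, (1 - δ) ^ N ω ∂P := by
  intro x
  have hA : MeasurableSet (agreeEvent N b U α α') :=
    measurableSet_agreeEvent hN hb hUmeas hαm hα'm
  have hsymmDiff : {ω | X ω ≤ x} ∆ {ω | X' ω ≤ x} ⊆ (agreeEvent N b U α α')ᶜ := by
    intro ω hω hωA
    simp only [mem_symmDiff, mem_ofPred, hagree ω hωA] at hω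
    tauto
  calc |P.real {ω | X ω ≤ x} - P.real {ω | X' ω ≤ x}|
      ≤ P.real (agreeEvent N b U α α')ᶜ := abs_measureReal_sub_le_of_symmDiff_subset hsymmDiff
    _ = 1 - P.real (agreeEvent N b U α α') := probReal_compl_eq_one_sub hA
    _ ≤ 1 - ∫ ω, (1 - δ) ^ N ω ∂P := by
      gcongr
      exact integral_pow_le_measureReal_agreeEvent hN hb hUmeas hUindep hUunif hUindepNb hαm hα'm
        hδ.2 hdiff

/-- Quantitative uniform continuity of distribution functions (Theorem 3(b) of the paper):
if `|α(t) − α'(t)| ≤ δ` for all `t` and `X = X'` on the agreement event `B(α,α')`, then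
`sup_x |P(X ≤ x) − P(X' ≤ x)| ≤ 1 − E[(1−δ)^N]`; the bound is independent of `X`, `X'`
and `x`. -/
theorem dist_cdf_le_of_agree {Ω : Type*} [MeasurableSpace Ω]
    (P : Measure Ω) [IsProbabilityMeasure P]
    (N : Ω → ℕ) (hN : Measurable N)
    (b : ℕ → Ω → ℝ) (hb : ∀ i, Measurable (b i))
    (U : ℕ → Ω → ℝ) (hUmeas : ∀ i, Measurable (U i))
    (hUindep : iIndepFun U P)
    (hUunif : ∀ i, P.map (U i) = (volume : Measure ℝ).restrict (Set.Icc 0 1))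
    (hUindepNb : Indep (⨆ i, MeasurableSpace.comap (U i) inferInstance)
      (MeasurableSpace.comap N inferInstance ⊔ ⨆ i, MeasurableSpace.comap (b i) inferInstance)
      P)
    (α α' : ℝ → ℝ) (hαm : Measurable α) (hα'm : Measurable α')
    (hα : ∀ t, α t ∈ Set.Icc (0 : ℝ) 1) (hα' : ∀ t, α' t ∈ Set.Icc (0 : ℝ) 1)
    (δ : ℝ) (hδ : δ ∈ Set.Icc (0 : ℝ) 1) (hdiff : ∀ t, |α t - α' t| ≤ δ)
    (X X' : Ω → ℝ) (hX : Measurable X) (hX' : Measurable X')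
    (hagree : ∀ ω ∈ agreeEvent N b U α α', X ω = X' ω) :
    ∀ x : ℝ, |(P {ω | X ω ≤ x}).toReal - (P {ω | X' ω ≤ x}).toReal| ≤
      1 - ∫ ω, (1 - δ) ^ N ω ∂P :=
  dist_cdf_le_of_agree_general P N hN b hb U hUmeas hUindep hUunif hUindepNb α α' hαm hα'm δ hδ
    hdiff X X' hagree
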